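/- arXiv:1509.00558 — 2 statements merged into one kernel-verified Lean document; each statement's English description precedes it below -/
import Mathlib

section
/- For β ∈ (0,1), the function D(x) = 1/(1 - β^x) is convex on (0, ∞). -/
/-! Since `x ↦ β ^ x` is convex, `1 - β ^ x` is concave, and it is positive for `x > 0`;
the reciprocal of a positive concave function is convex. -/

open Real Set

section Composition

variable {𝕜 E α β : Type*} [Semiring 𝕜] [PartialOrder 𝕜]
  [AddCommMonoid E] [AddCommMonoid α] [PartialOrder α] [AddCommMonoid β] [PartialOrder β]
  [SMul 𝕜 E] [SMul 𝕜 α] [SMul 𝕜 β] {s : Set E} {t : Set β} {f : E → β} {g : β → α}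

theorem ConvexOn.comp_concaveOn_of_mapsTo (hg : ConvexOn 𝕜 t g) (hf : ConcaveOn 𝕜 s f)
    (hg' : AntitoneOn g t) (hst : MapsTo f s t) : ConvexOn 𝕜 s (g ∘ f) :=
  ⟨hf.1, fun _ hx _ hy _ _ ha hb hab =>
    (hg' (hg.1 (hst hx) (hst hy) ha hb hab) (hst <| hf.1 hx hy ha hb hab)
      (hf.2 hx hy ha hb hab)).trans (hg.2 (hst hx) (hst hy) ha hb hab)⟩

end Composition

theorem ConcaveOn.convexOn_inv {𝕜 E : Type*} [Field 𝕜] [LinearOrder 𝕜] [IsStrictOrderedRing 𝕜]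
    [AddCommMonoid E] [SMul 𝕜 E] {s : Set E} {f : E → 𝕜} (hf : ConcaveOn 𝕜 s f)
    (hf₀ : ∀ x ∈ s, 0 < f x) : ConvexOn 𝕜 s fun x => (f x)⁻¹ := by
  have hinv : ConvexOn 𝕜 (Ioi 0) fun y : 𝕜 => y⁻¹ := by
    simpa using convexOn_zpow (𝕜 := 𝕜) (-1)
  exact hinv.comp_concaveOn_of_mapsTo hf (fun _ ha _ _ hab => inv_anti₀ ha hab) hf₀

/-- For `β ∈ (0,1)`, the function `D(x) = 1/(1 - β^x)` is convex on `(0, ∞)`. -/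
theorem delay_convexOn (β : ℝ) (hβ0 : 0 < β) (hβ1 : β < 1) :
    ConvexOn ℝ (Ioi (0 : ℝ)) (fun x : ℝ => 1 / (1 - β ^ x)) := by
  have hconcave : ConcaveOn ℝ (Ioi 0) fun x : ℝ => 1 - β ^ x :=
    (concaveOn_const 1 (convex_Ioi 0)).sub ((convexOn_rpow_left hβ0).subset (subset_univ _)
      (convex_Ioi 0))
  have hpos : ∀ x ∈ Ioi (0 : ℝ), 0 < 1 - β ^ x := fun x hx =>
    sub_pos.2 (rpow_lt_one hβ0.le hβ1 hx)
  simpa only [one_div] using hconcave.convexOn_inv hpos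
end

section
/- For β ∈ (0,1) and a ∈ (0,1), the function f₂(x) = -D(x)·aˣ = -aˣ/(1 - β^x) is concave on (0, ∞) provided D(x)aˣ = aˣ/(1-β^x) is convex on (0,∞); in particular, for any a, β ∈ (0,1), the function g(x) = aˣ/(1 - β^x) is convex on (0,∞). -/
/-!
Expanding the geometric series, `aˣ / (1 - βˣ) = ∑ₙ (a βⁿ)ˣ` for `x > 0`. Each summand is an
exponential `x ↦ cˣ` with `c > 0`, hence convex, and a pointwise convergent series of convex
functions is convex.
-/

open Real Set

theorem ConvexOn.of_hasSum {ι 𝕜 E β : Type*} [Semiring 𝕜] [PartialOrder 𝕜] [AddCommMonoid E]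
    [SMul 𝕜 E] [AddCommMonoid β] [PartialOrder β] [IsOrderedAddMonoid β] [TopologicalSpace β]
    [OrderClosedTopology β] [ContinuousAdd β] [Module 𝕜 β] [ContinuousConstSMul 𝕜 β]
    {s : Set E} {f : ι → E → β} {g : E → β} (hs : Convex 𝕜 s)
    (hf : ∀ i, ConvexOn 𝕜 s (f i)) (hg : ∀ x ∈ s, HasSum (fun i => f i x) (g x)) :
    ConvexOn 𝕜 s g :=
  ⟨hs, fun _x hx _y hy _a _b ha hb hab =>
    hasSum_le (fun i => (hf i).2 hx hy ha hb hab) (hg _ (hs hx hy ha hb hab))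
      (((hg _ hx).const_smul _).add ((hg _ hy).const_smul _))⟩

theorem Real.hasSum_mul_pow_rpow {a β x : ℝ} (ha : 0 ≤ a) (hβ0 : 0 ≤ β) (hβ1 : β < 1)
    (hx : 0 < x) : HasSum (fun n : ℕ => (a * β ^ n) ^ x) (a ^ x / (1 - β ^ x)) := by
  have hgeom : HasSum (fun n : ℕ => a ^ x * (β ^ x) ^ n) (a ^ x * (1 - β ^ x)⁻¹) :=
    (hasSum_geometric_of_lt_one (rpow_nonneg hβ0 x) (rpow_lt_one hβ0 hβ1 hx)).mul_left _
  rw [div_eq_mul_inv]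
  convert hgeom using 2 with n
  rw [mul_rpow ha (pow_nonneg hβ0 n), ← rpow_natCast, ← rpow_natCast, ← rpow_mul hβ0,
    ← rpow_mul hβ0, mul_comm (n : ℝ), mul_comm]

theorem f2_concaveOn_general (a β : ℝ) (ha0 : 0 < a) (hβ0 : 0 < β) (hβ1 : β < 1) :
    ConvexOn ℝ (Ioi (0 : ℝ)) (fun x : ℝ => a ^ x / (1 - β ^ x)) ∧
      ConcaveOn ℝ (Ioi (0 : ℝ)) (fun x : ℝ => -(a ^ x / (1 - β ^ x))) := by
  have hconv : ConvexOn ℝ (Ioi (0 : ℝ)) (fun x : ℝ => a ^ x / (1 - β ^ x)) :=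
    .of_hasSum (convex_Ioi 0)
      (fun n => (convexOn_rpow_left (mul_pos ha0 (pow_pos hβ0 n))).subset (subset_univ _)
        (convex_Ioi 0))
      (fun _ hx => hasSum_mul_pow_rpow ha0.le hβ0.le hβ1 hx)
  exact ⟨hconv, hconv.neg⟩

/-- For `a, β ∈ (0,1)`, `g(x) = aˣ/(1 - βˣ)` is convex on `(0,∞)`, and hence
`f₂(x) = -aˣ/(1 - βˣ)` is concave on `(0,∞)`. -/
theorem f2_concaveOn (a β : ℝ) (ha0 : 0 < a) (ha1 : a < 1) (hβ0 : 0 < β) (hβ1 : β < 1) :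
    ConvexOn ℝ (Ioi (0 : ℝ)) (fun x : ℝ => a ^ x / (1 - β ^ x)) ∧
      ConcaveOn ℝ (Ioi (0 : ℝ)) (fun x : ℝ => -(a ^ x / (1 - β ^ x))) :=
  f2_concaveOn_general a β ha0 hβ0 hβ1
end
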